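/- arXiv:2110.15494 — 4 statements merged into one kernel-verified Lean document; each statement's English description precedes it below -/
import Mathlib

section
/- Suppose d = F[m_*]w_* with w_* ∈ W_λ nonzero, and define e_λ[m, w] = ‖F[m]w - d‖²/(2‖d‖²) for w ∈ W_λ. If |m - m_*|·r > 2λ, then e_λ[m, w] = (‖w‖²/‖w_*‖² + 1)/2 for all w ∈ W_λ; in particular the minimum over w ∈ W_λ is 1/2, attained at w = 0, and (m, 0) is a local minimizer of e_λ with relative RMS error 1. -/
/-! When `|m - m_*| r > 2λ` the translates `F[m]w` and `d = F[m_*]w_*` have disjoint supports,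
so `‖F[m]w - d‖² = ‖F[m]w‖² + ‖d‖²` (Pythagoras), and translation does not change `L²` norms:
`‖F[m]w‖ = ‖w‖ / (4πr)`. -/

open MeasureTheory Real Set

section Translation

variable {G : Type*} [MeasurableSpace G] [AddGroup G] [MeasurableAdd G]
  {μ : Measure G} [μ.IsAddRightInvariant]

lemma integral_sq_comp_sub_div (f : G → ℝ) (c : G) (k : ℝ) :
    ∫ t, (f (t - c) / k) ^ 2 ∂μ = (∫ t, f t ^ 2 ∂μ) / k ^ 2 := by
  simp_rw [div_pow]
  rw [integral_div, integral_sub_right_eq_self (fun t => f t ^ 2) c]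

lemma integrable_sq_comp_sub_div {f : G → ℝ} (hf : MemLp f 2 μ) (c : G) (k : ℝ) :
    Integrable (fun t => (f (t - c) / k) ^ 2) μ := by
  simp_rw [div_pow]
  exact (hf.integrable_sq.comp_sub_right c).div_const _

end Translation

lemma integral_sub_sq_of_mul_eq_zero {α : Type*} [MeasurableSpace α] {μ : Measure α}
    {f g : α → ℝ} (hf : Integrable (fun x => f x ^ 2) μ) (hg : Integrable (fun x => g x ^ 2) μ)
    (hfg : ∀ᵐ x ∂μ, f x * g x = 0) :
    ∫ x, (f x - g x) ^ 2 ∂μ = ∫ x, f x ^ 2 ∂μ + ∫ x, g x ^ 2 ∂μ := by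
  rw [← integral_add hf hg]
  refine integral_congr_ae (hfg.mono fun x hx => ?_)
  linear_combination (-2) * hx

lemma comp_sub_mul_comp_sub_eq_zero {R : Type*} [MulZeroClass R] {f g : ℝ → R} {a b c : ℝ}
    (hf : Function.support f ⊆ Icc (-a) a) (hg : Function.support g ⊆ Icc (-a) a)
    (hbc : 2 * a < |b - c|) (t : ℝ) : f (t - b) * g (t - c) = 0 := by
  by_cases hfb : f (t - b) = 0
  · rw [hfb, zero_mul]
  refine mul_eq_zero_of_right _ (Function.notMem_support.1 fun hgc => ?_)
  obtain ⟨hb₁, hb₂⟩ := hf hfb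
  obtain ⟨hc₁, hc₂⟩ := hg hgc
  have : |b - c| ≤ 2 * a := abs_le.2 ⟨by linarith, by linarith⟩
  linarith

theorem stmt_3_general (r lam m mstar : ℝ) (hr : 0 < r)
    (wstar : ℝ → ℝ)
    (hwstar : MemLp wstar 2 (volume : Measure ℝ))
    (hsuppstar : Function.support wstar ⊆ Icc (-lam) lam)
    (hnz : 0 < ∫ t, (wstar t) ^ 2)
    (hfar : |m - mstar| * r > 2 * lam)
    (d : ℝ → ℝ) (hd : d = fun t => wstar (t - mstar * r) / (4 * π * r)) :
    (∀ w : ℝ → ℝ, MemLp w 2 (volume : Measure ℝ) →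
      Function.support w ⊆ Icc (-lam) lam →
      (∫ t, (w (t - m * r) / (4 * π * r) - d t) ^ 2) / (2 * ∫ t, (d t) ^ 2)
        = ((∫ t, (w t) ^ 2) / (∫ t, (wstar t) ^ 2) + 1) / 2) ∧
    (∫ t, ((0 : ℝ) - d t) ^ 2) / (2 * ∫ t, (d t) ^ 2) = 1 / 2 := by
  have hd2 : ∫ t, (d t) ^ 2 = (∫ t, (wstar t) ^ 2) / (4 * π * r) ^ 2 := by
    rw [hd]; exact integral_sq_comp_sub_div wstar (mstar * r) (4 * π * r)
  have hd2pos : 0 < ∫ t, (d t) ^ 2 := by rw [hd2]; positivity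
  refine ⟨fun w hw hsupp => ?_, ?_⟩
  · have hshift : 2 * lam < |m * r - mstar * r| := by
      rwa [← sub_mul, abs_mul, abs_of_pos hr]
    have hdisj : ∀ t, w (t - m * r) / (4 * π * r) * d t = 0 := fun t => by
      rw [hd, div_mul_div_comm, comp_sub_mul_comp_sub_eq_zero hsupp hsuppstar hshift, zero_div]
    rw [integral_sub_sq_of_mul_eq_zero (integrable_sq_comp_sub_div hw _ _)
        (hd ▸ integrable_sq_comp_sub_div hwstar _ _) (.of_forall hdisj),
      integral_sq_comp_sub_div, hd2]
    field_simp
  · simp_rw [zero_sub, neg_sq]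
    field_simp

/-- For noise-free data `d = F[m_*]w_*` with `w_* ∈ W_λ` nonzero,
if `|m - m_*| r > 2λ` then `e_λ[m, w] = (‖w‖²/‖w_*‖² + 1)/2` for all
`w ∈ W_λ`; in particular the minimum over `w ∈ W_λ` is `1/2`, attained at
`w = 0` (relative RMS error 1). -/
theorem stmt_3 (r lam m mstar : ℝ) (hr : 0 < r) (hlam : 0 < lam)
    (wstar : ℝ → ℝ)
    (hwstar : MemLp wstar 2 (volume : Measure ℝ))
    (hsuppstar : Function.support wstar ⊆ Icc (-lam) lam)
    (hnz : 0 < ∫ t, (wstar t) ^ 2)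
    (hfar : |m - mstar| * r > 2 * lam)
    (d : ℝ → ℝ) (hd : d = fun t => wstar (t - mstar * r) / (4 * π * r)) :
    (∀ w : ℝ → ℝ, MemLp w 2 (volume : Measure ℝ) →
      Function.support w ⊆ Icc (-lam) lam →
      (∫ t, (w (t - m * r) / (4 * π * r) - d t) ^ 2) / (2 * ∫ t, (d t) ^ 2)
        = ((∫ t, (w t) ^ 2) / (∫ t, (wstar t) ^ 2) + 1) / 2) ∧
    (∫ t, ((0 : ℝ) - d t) ^ 2) / (2 * ∫ t, (d t) ^ 2) = 1 / 2 :=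
  stmt_3_general r lam m mstar hr wstar hwstar hsuppstar hnz hfar d hd
end

section
/- With the explicit normal-equation solution w_α[m; d], the data residual satisfies (F[m]w_α[m; d] - d)(t) = -(4πr·α·a(t - mr))² (1 + (4πr·α·a(t - mr))²)^{-1} d(t), and hence the mean-square misfit is e[m, w_α[m;d]; d] = (2‖d‖²)^{-1} ∫_{t_min}^{t_max} (4πr·α·a(t - mr))^4 (1 + (4πr·α·a(t - mr))²)^{-2} d(t)² dt. -/
open MeasureTheory Real Set

/-! Pointwise, `F[m] w_α[m;d]` is `d` divided by `1 + (4πrα a)²`, so the residual is the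
Tikhonov filter factor `x² / (1 + x²)` (with `x = 4πrα a(t - mr)`) times `-d`; squaring and
integrating gives the misfit. -/

theorem regularized_residual_eq {K : Type*} [Field K] [LinearOrder K] [IsStrictOrderedRing K]
    {c : K} (hc : c ≠ 0) (α A D : K) :
    (1 / c ^ 2 + α ^ 2 * A ^ 2)⁻¹ * (D / c) / c - D
      = -((c * α * A) ^ 2 * (1 + (c * α * A) ^ 2)⁻¹ * D) := by
  have hden : 1 / c ^ 2 + α ^ 2 * A ^ 2 ≠ 0 := by positivity
  have hden' : 1 + (c * α * A) ^ 2 ≠ 0 := by positivity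
  field_simp
  ring

theorem sq_neg_filter_factor_mul {K : Type*} [Field K] (x D : K) :
    (-(x ^ 2 * (1 + x ^ 2)⁻¹ * D)) ^ 2 = x ^ 4 * ((1 + x ^ 2) ^ 2)⁻¹ * D ^ 2 := by
  rw [neg_sq, mul_pow, mul_pow, ← pow_mul, inv_pow]

theorem stmt_8_general (r tmin tmax α : ℝ) (a d : ℝ → ℝ)
    (hr : 0 < r)
    (m : ℝ)
    (walpha : ℝ → ℝ)
    (hw : walpha = (Icc (tmin - m * r) (tmax - m * r)).indicator
        (fun t => (1 / (4 * π * r) ^ 2 + α ^ 2 * (a t) ^ 2)⁻¹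
          * (d (t + m * r) / (4 * π * r)))) :
    (∀ t ∈ Icc tmin tmax,
      walpha (t - m * r) / (4 * π * r) - d t
        = -((4 * π * r * α * a (t - m * r)) ^ 2
            * (1 + (4 * π * r * α * a (t - m * r)) ^ 2)⁻¹ * d t)) ∧
    (∫ t in Icc tmin tmax, (walpha (t - m * r) / (4 * π * r) - d t) ^ 2)
        / (2 * ∫ t in Icc tmin tmax, (d t) ^ 2)
      = (2 * ∫ t in Icc tmin tmax, (d t) ^ 2)⁻¹ *
        ∫ t in Icc tmin tmax, (4 * π * r * α * a (t - m * r)) ^ 4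
          * ((1 + (4 * π * r * α * a (t - m * r)) ^ 2) ^ 2)⁻¹ * (d t) ^ 2 := by
  have hc : 4 * π * r ≠ 0 := by positivity
  have hresidual : ∀ t ∈ Icc tmin tmax,
      walpha (t - m * r) / (4 * π * r) - d t
        = -((4 * π * r * α * a (t - m * r)) ^ 2
            * (1 + (4 * π * r * α * a (t - m * r)) ^ 2)⁻¹ * d t) := by
    intro t ht
    have hshift : t - m * r ∈ Icc (tmin - m * r) (tmax - m * r) :=
      sub_mem_Icc_iff_left.2 (by simpa only [sub_add_cancel] using ht)
    rw [hw, indicator_of_mem hshift, sub_add_cancel]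
    exact regularized_residual_eq hc α _ _
  refine ⟨hresidual, ?_⟩
  rw [div_eq_inv_mul]
  congr 1
  exact setIntegral_congr_fun measurableSet_Icc fun t ht => by
    simp only [hresidual t ht, sq_neg_filter_factor_mul]

/-- With the explicit normal-equation solution `w_α[m;d]`, the
data residual satisfies
`(F[m]w_α - d)(t) = -(4πrα a(t-mr))² (1+(4πrα a(t-mr))²)⁻¹ d(t)` on
`[t_min, t_max]`, and hence the mean-square misfit `e[m, w_α; d]` equals
`(2‖d‖²)⁻¹ ∫ (4πrα a(t-mr))⁴ (1+(4πrα a(t-mr))²)⁻² d(t)² dt`. -/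
theorem stmt_8 (r mmin mmax lammax tmin tmax C α : ℝ) (a d : ℝ → ℝ)
    (hr : 0 < r) (hmmin : 0 < mmin) (hmm : mmin ≤ mmax) (hlammax : 0 < lammax)
    (ht : tmin < tmax) (hC : 0 < C) (hα : 0 < α)
    (habd : ∃ K, ∀ t, |a t| ≤ K)
    (ha0 : ∀ t, 0 ≤ a t) (haC : ∀ t, lammax ≤ |t| → C ≤ a t)
    (hcont : Icc (mmin * r - lammax) (mmax * r + lammax) ⊆ Icc tmin tmax)
    (m : ℝ) (hm : m ∈ Ioo mmin mmax)
    (hd : MemLp d 2 ((volume : Measure ℝ).restrict (Icc tmin tmax)))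
    (hdnz : 0 < ∫ t in Icc tmin tmax, (d t) ^ 2)
    (walpha : ℝ → ℝ)
    (hw : walpha = (Icc (tmin - m * r) (tmax - m * r)).indicator
        (fun t => (1 / (4 * π * r) ^ 2 + α ^ 2 * (a t) ^ 2)⁻¹
          * (d (t + m * r) / (4 * π * r)))) :
    (∀ t ∈ Icc tmin tmax,
      walpha (t - m * r) / (4 * π * r) - d t
        = -((4 * π * r * α * a (t - m * r)) ^ 2
            * (1 + (4 * π * r * α * a (t - m * r)) ^ 2)⁻¹ * d t)) ∧
    (∫ t in Icc tmin tmax, (walpha (t - m * r) / (4 * π * r) - d t) ^ 2)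
        / (2 * ∫ t in Icc tmin tmax, (d t) ^ 2)
      = (2 * ∫ t in Icc tmin tmax, (d t) ^ 2)⁻¹ *
        ∫ t in Icc tmin tmax, (4 * π * r * α * a (t - m * r)) ^ 4
          * ((1 + (4 * π * r * α * a (t - m * r)) ^ 2) ^ 2)⁻¹ * (d t) ^ 2 :=
  stmt_8_general r tmin tmax α a d hr m walpha hw
end

section
/- For noise-free data d = F[m_*]w_* with w_* ∈ W_λ and penalty multiplier a(t) = min(|t|, τ), every stationary point m ∈ M of the reduced objective J̃_α[·; d] satisfies |m - m_*| < λ/r. -/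
open MeasureTheory Real Set

/-!
On the data window `[tmin, tmax]` the penalty `a(t - m r) = min |t - m r| τ` is just
`|t - m r|`, so near any `m ∈ M` the reduced objective is a positive multiple of
`∫ φ(t - m r) d(t)² dt` with `φ(y) = (c y)² / (1 + (c y)²)`, `c = 4πrα`.
Differentiating under the integral sign, `J̃'(m)` is a nonzero multiple of
`∫ φ'(t - m r) d(t)² dt`, and `φ'` has the sign of its argument. If `|m - m_*| r ≥ λ`,
the support of `d`, contained in `[m_* r - λ, m_* r + λ]`, lies on one side of `m r`;
so the integrand has a strict sign on the support of `d` (off the single point `m r`)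
and `J̃'(m) ≠ 0`.
-/

lemma abs_sub_le_max_of_mem_Icc {a b c d x y : ℝ} (hx : x ∈ Icc a b) (hy : y ∈ Icc c d) :
    |x - y| ≤ max (max |a - c| |a - d|) (max |b - c| |b - d|) := by
  have hx' : |x - y| ≤ max |a - y| |b - y| :=
    abs_le_max_abs_abs (by linarith [hx.1]) (by linarith [hx.2])
  have hy' : ∀ e, |e - y| ≤ max |e - c| |e - d| := fun e =>
    (abs_le_max_abs_abs (by linarith [hy.2]) (by linarith [hy.1])).trans_eq (max_comm _ _)
  exact hx'.trans (max_le_max (hy' a) (hy' b))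

section SaturatedSq

/-- The weight in the reduced objective `J̃_α` when the penalty multiplier is `a(t) = |t|`. -/
noncomputable def saturatedSq (c y : ℝ) : ℝ := (c * y) ^ 2 * (1 + (c * y) ^ 2)⁻¹

noncomputable def saturatedSqDeriv (c y : ℝ) : ℝ := 2 * c ^ 2 * y / (1 + (c * y) ^ 2) ^ 2

variable (c : ℝ)

lemma hasDerivAt_saturatedSq (y : ℝ) : HasDerivAt (saturatedSq c) (saturatedSqDeriv c y) y := by
  have hpos : (1 : ℝ) + (c * y) ^ 2 ≠ 0 := by positivity
  have hsq : HasDerivAt (fun y => (c * y) ^ 2) (2 * c ^ 2 * y) y :=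
    (((hasDerivAt_id y).const_mul c).pow 2).congr_deriv (by simp only [id]; ring)
  refine (hsq.mul ((hsq.const_add 1).fun_inv hpos)).congr_deriv ?_
  rw [saturatedSqDeriv]
  field_simp
  ring

lemma abs_saturatedSq_le_one (y : ℝ) : |saturatedSq c y| ≤ 1 := by
  have hpos : (0 : ℝ) < 1 + (c * y) ^ 2 := by positivity
  rw [saturatedSq, abs_of_nonneg (by positivity), mul_inv_le_iff₀ hpos]
  linarith

lemma abs_saturatedSqDeriv_le (y : ℝ) : |saturatedSqDeriv c y| ≤ |c| := by
  have hpos : (0 : ℝ) < (1 + (c * y) ^ 2) ^ 2 := by positivity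
  have hu : 2 * |c * y| ≤ (1 + (c * y) ^ 2) ^ 2 := by
    nlinarith [sq_nonneg (|c * y| - 1), sq_abs (c * y), sq_nonneg (c * y)]
  have hnum : |2 * c ^ 2 * y| = |c| * (2 * |c * y|) := by
    rw [abs_mul, abs_mul, abs_mul, abs_pow, abs_two]
    ring
  rw [saturatedSqDeriv, abs_div, abs_of_pos hpos, div_le_iff₀ hpos, hnum]
  exact mul_le_mul_of_nonneg_left hu (abs_nonneg c)

lemma continuous_saturatedSqDeriv : Continuous (saturatedSqDeriv c) :=
  Continuous.div (by fun_prop) (by fun_prop) fun y => by positivity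

variable {c}

lemma saturatedSqDeriv_pos (hc : c ≠ 0) {y : ℝ} (hy : 0 < y) : 0 < saturatedSqDeriv c y := by
  unfold saturatedSqDeriv
  positivity

lemma saturatedSqDeriv_neg (hc : c ≠ 0) {y : ℝ} (hy : y < 0) : saturatedSqDeriv c y < 0 :=
  div_neg_of_neg_of_pos (mul_neg_of_pos_of_neg (by positivity) hy) (by positivity)

end SaturatedSq

section Integrals

variable {μ : Measure ℝ} {ρ : ℝ → ℝ}

lemma integrable_comp_sub_mul {g : ℝ → ℝ} {B : ℝ} (hg : Continuous g) (hgB : ∀ y, |g y| ≤ B)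
    (hρ : Integrable ρ μ) (x : ℝ) : Integrable (fun t => g (t - x) * ρ t) μ :=
  hρ.bdd_mul (hg.comp (continuous_sub_right x)).aestronglyMeasurable
    (ae_of_all _ fun t => (Real.norm_eq_abs _).trans_le (hgB (t - x)))

theorem hasDerivAt_integral_comp_sub_mul {f f' : ℝ → ℝ} {B K : ℝ}
    (hf : ∀ y, HasDerivAt f (f' y) y) (hf' : Continuous f') (hfB : ∀ y, |f y| ≤ B)
    (hf'K : ∀ y, |f' y| ≤ K) (hρ : Integrable ρ μ) (x : ℝ) :
    HasDerivAt (fun p => ∫ t, f (t - p) * ρ t ∂μ) (-∫ t, f' (t - x) * ρ t ∂μ) x := by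
  have hfc : Continuous f := continuous_iff_continuousAt.2 fun y => (hf y).continuousAt
  have hderiv := (hasDerivAt_integral_of_dominated_loc_of_deriv_le (μ := μ)
    (F := fun p t => f (t - p) * ρ t) (F' := fun p t => -(f' (t - p) * ρ t))
    (bound := fun t => K * ‖ρ t‖) Filter.univ_mem
    (Filter.Eventually.of_forall fun p =>
      (integrable_comp_sub_mul hfc hfB hρ p).aestronglyMeasurable)
    (integrable_comp_sub_mul hfc hfB hρ x)
    (integrable_comp_sub_mul hf' hf'K hρ x).neg.aestronglyMeasurable
    (ae_of_all _ fun t p _ => by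
      rw [norm_neg, norm_mul, Real.norm_eq_abs]
      exact mul_le_mul_of_nonneg_right (hf'K _) (norm_nonneg _))
    (hρ.norm.const_mul K)
    (ae_of_all _ fun t p _ => by
      simpa only [neg_mul] using ((hf (t - p)).comp_const_sub t p).mul_const (ρ t))).2
  rwa [integral_neg] at hderiv

theorem integral_mul_pos_of_pos_on_support {α : Type*} [MeasurableSpace α] {μ : Measure α}
    [NullSingletonClass μ] {g ρ : α → ℝ} {x : α} (hρ0 : 0 ≤ ρ) (hρ : 0 < ∫ t, ρ t ∂μ)
    (hint : Integrable (fun t => g t * ρ t) μ) (hg : ∀ t ∈ Function.support ρ, t ≠ x → 0 < g t) :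
    0 < ∫ t, g t * ρ t ∂μ := by
  have hsupp : Function.support ρ \ {x} ⊆ Function.support (fun t => g t * ρ t) :=
    fun t ht => mul_ne_zero (hg t ht.1 ht.2).ne' ht.1
  refine (integral_pos_iff_support_of_nonneg_ae ?_ hint).2 ?_
  · filter_upwards [μ.ae_ne x] with t htx
    rcases eq_or_ne (ρ t) 0 with h | h
    · simp [h]
    · exact mul_nonneg (hg t h htx).le (hρ0 t)
  · calc 0 < μ (Function.support ρ) :=
          (integral_pos_iff_support_of_nonneg hρ0 (.of_integral_ne_zero hρ.ne')).1 hρ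
      _ = μ (Function.support ρ \ {x}) := (measure_sdiff_null (measure_singleton x)).symm
      _ ≤ _ := measure_mono hsupp

theorem integral_comp_sub_mul_ne_zero [NullSingletonClass μ] {h : ℝ → ℝ} {s ℓ x : ℝ}
    (hpos : ∀ y, 0 < y → 0 < h y) (hneg : ∀ y, y < 0 → h y < 0) (hρ0 : 0 ≤ ρ)
    (hρ : 0 < ∫ t, ρ t ∂μ) (hsupp : Function.support ρ ⊆ Icc (s - ℓ) (s + ℓ))
    (hx : ℓ ≤ |x - s|) (hint : Integrable (fun t => h (t - x) * ρ t) μ) :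
    ∫ t, h (t - x) * ρ t ∂μ ≠ 0 := by
  rcases le_abs'.1 hx with hleft | hright
  · refine (integral_mul_pos_of_pos_on_support (x := x) hρ0 hρ hint
      fun t ht htx => hpos _ ?_).ne'
    have hts := (hsupp ht).1
    exact sub_pos.2 (lt_of_le_of_ne (by linarith) htx.symm)
  · have hneg_pos := integral_mul_pos_of_pos_on_support (g := fun t => -h (t - x)) (x := x)
      hρ0 hρ (by simpa only [neg_mul] using hint.fun_neg) fun t ht htx => neg_pos.2 (hneg _ ?_)
    · simp only [neg_mul, integral_neg, neg_pos] at hneg_pos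
      exact hneg_pos.ne
    · have hts := (hsupp ht).2
      exact sub_neg.2 (lt_of_le_of_ne (by linarith) htx)

theorem hasDerivAt_integral_saturatedSq_comp_sub_mul (c r m : ℝ) (hρ : Integrable ρ μ) :
    HasDerivAt (fun p => ∫ t, saturatedSq c (t - p * r) * ρ t ∂μ)
      ((-∫ t, saturatedSqDeriv c (t - m * r) * ρ t ∂μ) * r) m := by
  have hG := hasDerivAt_integral_comp_sub_mul (hasDerivAt_saturatedSq c)
    (continuous_saturatedSqDeriv c) (abs_saturatedSq_le_one c) (abs_saturatedSqDeriv_le c) hρ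
    (m * r)
  exact hG.comp m (hasDerivAt_mul_const r)

theorem integral_saturatedSqDeriv_comp_sub_mul_ne_zero [NullSingletonClass μ] {c s ℓ x : ℝ}
    (hc : c ≠ 0) (hρ0 : 0 ≤ ρ) (hρ : 0 < ∫ t, ρ t ∂μ)
    (hsupp : Function.support ρ ⊆ Icc (s - ℓ) (s + ℓ)) (hx : ℓ ≤ |x - s|) :
    ∫ t, saturatedSqDeriv c (t - x) * ρ t ∂μ ≠ 0 :=
  integral_comp_sub_mul_ne_zero (fun _ => saturatedSqDeriv_pos hc)
    (fun _ => saturatedSqDeriv_neg hc) hρ0 hρ hsupp hx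
    (integrable_comp_sub_mul (continuous_saturatedSqDeriv c) (abs_saturatedSqDeriv_le c)
      (.of_integral_ne_zero hρ.ne') x)

end Integrals

lemma support_sq_comp_sub_div_subset {w : ℝ → ℝ} {ℓ : ℝ}
    (hw : Function.support w ⊆ Icc (-ℓ) ℓ) (s k : ℝ) :
    Function.support (fun t => (w (t - s) / k) ^ 2) ⊆ Icc (s - ℓ) (s + ℓ) := fun t ht => by
  have hmem := hw (fun h => ht (by simp [h]) : w (t - s) ≠ 0)
  constructor <;> linarith [hmem.1, hmem.2]

lemma setIntegral_sq_comp_sub_div_pos {w : ℝ → ℝ} {S : Set ℝ} {s k : ℝ} (hk : k ≠ 0)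
    (hw : 0 < ∫ t, w t ^ 2) (hS : Function.support (fun t => (w (t - s) / k) ^ 2) ⊆ S) :
    0 < ∫ t in S, (w (t - s) / k) ^ 2 := by
  rw [setIntegral_eq_integral_of_forall_compl_eq_zero fun t ht =>
    Function.notMem_support.1 fun h => ht (hS h)]
  simp only [div_pow, integral_div, integral_sub_right_eq_self (fun t => w t ^ 2) s]
  positivity

theorem stmt_14_general (r mmin mmax lammax tmin tmax α lam mstar : ℝ)
    (wstar : ℝ → ℝ)
    (hr : 0 < r) (hα : 0 < α)
    (hlam' : lam ≤ lammax)
    (hmstar : mstar ∈ Ioo mmin mmax)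
    (hsupp : Function.support wstar ⊆ Icc (-lam) lam)
    (hnz : 0 < ∫ t, (wstar t) ^ 2)
    (hcont : Icc (mmin * r - lammax) (mmax * r + lammax) ⊆ Icc tmin tmax)
    (tau : ℝ)
    (htau : tau = max (max |tmin - mmin * r| |tmin - mmax * r|)
        (max |tmax - mmin * r| |tmax - mmax * r|))
    (a d : ℝ → ℝ)
    (ha : a = fun t => min |t| tau)
    (hd : d = fun t => wstar (t - mstar * r) / (4 * π * r))
    (J : ℝ → ℝ)
    (hJ : J = fun m => (2 * ∫ t in Icc tmin tmax, (d t) ^ 2)⁻¹ *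
        ∫ t in Icc tmin tmax, (4 * π * r * α * a (t - m * r)) ^ 2
          * (1 + (4 * π * r * α * a (t - m * r)) ^ 2)⁻¹ * (d t) ^ 2)
    (m : ℝ) (hm : m ∈ Ioo mmin mmax)
    (hstat : deriv J m = 0) :
    |m - mstar| < lam / r := by
  subst ha hd
  by_contra! hfar
  set s := mstar * r
  set c := 4 * π * r * α
  set μ := volume.restrict (Icc tmin tmax)
  set ρ : ℝ → ℝ := fun t => (wstar (t - s) / (4 * π * r)) ^ 2 with hρ_def
  have hρ_supp : Function.support ρ ⊆ Icc (s - lam) (s + lam) :=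
    support_sq_comp_sub_div_subset hsupp s _
  have hρ_pos : 0 < ∫ t, ρ t ∂μ := setIntegral_sq_comp_sub_div_pos (by positivity) hnz <|
    hρ_supp.trans <| (Icc_subset_Icc (by linarith [mul_lt_mul_of_pos_right hmstar.1 hr])
      (by linarith [mul_lt_mul_of_pos_right hmstar.2 hr])).trans hcont
  have hJ_eq : J =ᶠ[nhds m]
      fun p => (2 * ∫ t, ρ t ∂μ)⁻¹ * ∫ t, saturatedSq c (t - p * r) * ρ t ∂μ := by
    filter_upwards [isOpen_Ioo.mem_nhds hm] with p hp
    simp only [hJ]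
    congr 1
    refine integral_congr_ae (ae_restrict_of_forall_mem measurableSet_Icc fun (t : ℝ) ht => ?_)
    have hτ : |t - p * r| ≤ tau := by
      rw [htau]
      exact abs_sub_le_max_of_mem_Icc ht
        ⟨mul_le_mul_of_nonneg_right hp.1.le hr.le, mul_le_mul_of_nonneg_right hp.2.le hr.le⟩
    simp only [min_eq_left hτ, saturatedSq, mul_pow, sq_abs, hρ_def]
  have hderiv := (hasDerivAt_integral_saturatedSq_comp_sub_mul c r m
    (.of_integral_ne_zero hρ_pos.ne')).const_mul (2 * ∫ t, ρ t ∂μ)⁻¹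
  rw [hJ_eq.deriv_eq, hderiv.deriv] at hstat
  have hmr : lam ≤ |m * r - s| := by
    rwa [← sub_mul, abs_mul, abs_of_pos hr, ← div_le_iff₀ hr]
  have hc : c ≠ 0 := by positivity
  have hne := integral_saturatedSqDeriv_comp_sub_mul_ne_zero hc (fun t => sq_nonneg _) hρ_pos
    hρ_supp hmr
  exact mul_ne_zero (inv_ne_zero (mul_pos two_pos hρ_pos).ne')
    (mul_ne_zero (neg_ne_zero.2 hne) hr.ne') hstat

/-- For noise-free data `d = F[m_*]w_*` with `w_* ∈ W_λ` nonzero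
and penalty multiplier `a(t) = min(|t|, τ)`, every stationary point `m ∈ M` of
the reduced objective `J̃_α[·;d]` satisfies `|m - m_*| < λ/r`. -/
theorem stmt_14 (r mmin mmax lammax tmin tmax α lam mstar : ℝ)
    (wstar : ℝ → ℝ)
    (hr : 0 < r) (hmmin : 0 < mmin) (hmm : mmin ≤ mmax) (hlammax : 0 < lammax)
    (ht : tmin < tmax) (hα : 0 < α)
    (hlam : 0 < lam) (hlam' : lam ≤ lammax)
    (hmstar : mstar ∈ Ioo mmin mmax)
    (hwstar : MemLp wstar 2 (volume : Measure ℝ))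
    (hsupp : Function.support wstar ⊆ Icc (-lam) lam)
    (hnz : 0 < ∫ t, (wstar t) ^ 2)
    (hcont : Icc (mmin * r - lammax) (mmax * r + lammax) ⊆ Icc tmin tmax)
    (tau : ℝ)
    (htau : tau = max (max |tmin - mmin * r| |tmin - mmax * r|)
        (max |tmax - mmin * r| |tmax - mmax * r|))
    (a d : ℝ → ℝ)
    (ha : a = fun t => min |t| tau)
    (hd : d = fun t => wstar (t - mstar * r) / (4 * π * r))
    (J : ℝ → ℝ)
    (hJ : J = fun m => (2 * ∫ t in Icc tmin tmax, (d t) ^ 2)⁻¹ *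
        ∫ t in Icc tmin tmax, (4 * π * r * α * a (t - m * r)) ^ 2
          * (1 + (4 * π * r * α * a (t - m * r)) ^ 2)⁻¹ * (d t) ^ 2)
    (m : ℝ) (hm : m ∈ Ioo mmin mmax)
    (hstat : deriv J m = 0) :
    |m - mstar| < lam / r :=
  stmt_14_general r mmin mmax lammax tmin tmax α lam mstar wstar hr hα hlam' hmstar hsupp hnz hcont
    tau htau a d ha hd J hJ m hm hstat
end

section
/- For fixed m with |m - m_*|r ≤ μ and noise-free data d = F[m_*]w_*, w_* ∈ W_μ, the misfit e[m, w_α[m;d]; d] converges to ‖d‖²/2 as α → ∞; i.e., in the large-penalty limit the extended inversion fits none of the data. -/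
/-!
The residual of the extended inversion is `(q_α - 1) d`, where the multiplier
`q_α = (1 + (4πrα)² a(t - m r)²)⁻¹` lies in `[0, 1]` and tends to `0` wherever
`a(t - m r) ≠ 0`, i.e. off the single point `t = m r` (as `τ > 0`). Dominated
convergence with majorant `d²` then sends the misfit to `‖d‖² / 2`.
-/

open MeasureTheory Real Set Filter Topology

lemma abs_inv_one_add_mul_sub_le {y : ℝ} (hy : 0 ≤ y) (x : ℝ) :
    |(1 + y)⁻¹ * x - x| ≤ |x| := by
  have hq : (1 + y)⁻¹ * x - x = -(y / (1 + y)) * x := by field_simp; ring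
  have hy_le : |y / (1 + y)| ≤ 1 := by
    rw [abs_of_nonneg (by positivity), div_le_one (by positivity)]
    linarith
  rw [hq, abs_mul, abs_neg]
  exact mul_le_of_le_one_left (abs_nonneg x) hy_le

lemma tendsto_inv_one_add_sq_mul_atTop {c : ℝ} (hc : 0 < c) :
    Tendsto (fun α : ℝ => (1 + α ^ 2 * c)⁻¹) atTop (𝓝 0) :=
  (tendsto_atTop_add_const_left _ 1
    ((tendsto_pow_atTop two_ne_zero).atTop_mul_const hc)).inv_tendsto_atTop

theorem tendsto_integral_sq_inv_one_add_sq_mul_sub {X : Type*} [MeasurableSpace X]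
    {μ : Measure X} {g s : X → ℝ} (hg : MemLp g 2 μ) (hs : AEMeasurable s μ)
    (hs_nonneg : ∀ x, 0 ≤ s x) (hs_ne : ∀ᵐ x ∂μ, s x ≠ 0) :
    Tendsto (fun α : ℝ => ∫ x, ((1 + α ^ 2 * s x)⁻¹ * g x - g x) ^ 2 ∂μ)
      atTop (𝓝 (∫ x, g x ^ 2 ∂μ)) := by
  have hg_meas := hg.aestronglyMeasurable.aemeasurable
  refine tendsto_integral_filter_of_dominated_convergence (fun x => g x ^ 2)
    (.of_forall fun α => ?_) (.of_forall fun α => .of_forall fun x => ?_)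
    hg.integrable_sq ?_
  · exact (((((hs.const_mul _).const_add 1).inv).mul hg_meas).sub hg_meas).pow_const 2
      |>.aestronglyMeasurable
  · rw [norm_pow, Real.norm_eq_abs, ← sq_abs (g x)]
    exact pow_le_pow_left₀ (abs_nonneg _)
      (abs_inv_one_add_mul_sub_le (by positivity [hs_nonneg x]) (g x)) 2
  · filter_upwards [hs_ne] with x hx
    have hq := tendsto_inv_one_add_sq_mul_atTop ((hs_nonneg x).lt_of_ne' hx)
    simpa using ((hq.mul_const (g x)).sub_const (g x)).pow 2

theorem stmt_16_general (r mmin mmax tmin tmax mstar m : ℝ)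
    (wstar : ℝ → ℝ)
    (hr : 0 < r)
    (ht : tmin < tmax)
    (hwstar : MemLp wstar 2 (volume : Measure ℝ))
    (tau : ℝ)
    (htau : tau = max (max |tmin - mmin * r| |tmin - mmax * r|)
        (max |tmax - mmin * r| |tmax - mmax * r|))
    (a d : ℝ → ℝ)
    (ha : a = fun t => min |t| tau)
    (hd : d = fun t => wstar (t - mstar * r) / (4 * π * r))
    (walpha : ℝ → ℝ → ℝ)
    (hw : walpha = fun α t => (1 + (4 * π * r) ^ 2 * α ^ 2 * (a t) ^ 2)⁻¹
        * wstar (t + (m - mstar) * r)) :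
    Tendsto (fun α : ℝ =>
        (1 / 2) * ∫ t in Icc tmin tmax,
          (walpha α (t - m * r) / (4 * π * r) - d t) ^ 2)
      atTop (nhds ((1 / 2) * ∫ t in Icc tmin tmax, (d t) ^ 2)) := by
  subst ha hd hw
  have htau_pos : 0 < tau := by
    have hmin : |tmin - mmin * r| ≤ tau := htau ▸ (le_max_left _ _).trans (le_max_left _ _)
    have hmax : |tmax - mmin * r| ≤ tau := htau ▸ (le_max_left _ _).trans (le_max_right _ _)
    linarith [neg_le_abs (tmin - mmin * r), le_abs_self (tmax - mmin * r)]
  have hd_memLp : MemLp (fun t => wstar (t - mstar * r) / (4 * π * r)) 2 volume := by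
    simpa only [div_eq_mul_inv, Function.comp_def] using
      (hwstar.comp_measurePreserving (measurePreserving_sub_right volume (mstar * r))).mul_const
        (4 * π * r)⁻¹
  have hs_ne : ∀ᵐ t ∂volume.restrict (Icc tmin tmax),
      (4 * π * r) ^ 2 * min |t - m * r| tau ^ 2 ≠ 0 := by
    filter_upwards [ae_restrict_of_ae (volume.ae_ne (m * r))] with t htm
    have : 0 < min |t - m * r| tau := lt_min (abs_pos.mpr (sub_ne_zero.mpr htm)) htau_pos
    positivity
  refine ((tendsto_integral_sq_inv_one_add_sq_mul_sub (hd_memLp.restrict _)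
    (by fun_prop) (fun t => by positivity) hs_ne).const_mul (1 / 2)).congr fun α => ?_
  congr 2 with t
  dsimp only
  rw [show t - m * r + (m - mstar) * r = t - mstar * r by ring]
  ring

/-- For fixed `m` with `|m - m_*| r ≤ μ` and noise-free data
`d = F[m_*]w_*`, `w_* ∈ W_μ`, the misfit `e[m, w_α[m;d]; d]` (here the
unnormalized misfit `½‖F[m]w_α - d‖²`) converges to `‖d‖²/2` as `α → ∞`:
in the large-penalty limit the extended inversion fits none of the data. -/
theorem stmt_16 (r mmin mmax lammax tmin tmax mu mstar m : ℝ)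
    (wstar : ℝ → ℝ)
    (hr : 0 < r) (hmmin : 0 < mmin) (hmm : mmin ≤ mmax) (hlammax : 0 < lammax)
    (ht : tmin < tmax)
    (hmu : 0 < mu) (hmu' : mu ≤ lammax)
    (hmstar : mstar ∈ Ioo mmin mmax) (hm : m ∈ Ioo mmin mmax)
    (hwstar : MemLp wstar 2 (volume : Measure ℝ))
    (hsupp : Function.support wstar ⊆ Icc (-mu) mu)
    (hnz : 0 < ∫ t, (wstar t) ^ 2)
    (hnear : |m - mstar| * r ≤ mu)
    (hcont : Icc (mmin * r - lammax) (mmax * r + lammax) ⊆ Icc tmin tmax)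
    (tau : ℝ)
    (htau : tau = max (max |tmin - mmin * r| |tmin - mmax * r|)
        (max |tmax - mmin * r| |tmax - mmax * r|))
    (a d : ℝ → ℝ)
    (ha : a = fun t => min |t| tau)
    (hd : d = fun t => wstar (t - mstar * r) / (4 * π * r))
    (walpha : ℝ → ℝ → ℝ)
    (hw : walpha = fun α t => (1 + (4 * π * r) ^ 2 * α ^ 2 * (a t) ^ 2)⁻¹
        * wstar (t + (m - mstar) * r)) :
    Tendsto (fun α : ℝ =>
        (1 / 2) * ∫ t in Icc tmin tmax,
          (walpha α (t - m * r) / (4 * π * r) - d t) ^ 2)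
      atTop (nhds ((1 / 2) * ∫ t in Icc tmin tmax, (d t) ^ 2)) :=
  stmt_16_general r mmin mmax tmin tmax mstar m wstar hr ht hwstar tau htau a d ha hd walpha hw
end
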